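/- Let μ, ν be probability measures on normed spaces X, Y; H : X → Y, G : Y → X measurable. Define for 1-Lipschitz φ, ψ the quantity D(φ,ψ) := (1/2)[∫φ dμ - ∫(φ∘G) dν + ∫ψ dν - ∫(ψ∘H) dμ]. Then for any coupling π of (μ,ν) and any 1-Lipschitz φ, ψ (with all integrands integrable), D(φ,ψ) ≤ ∫ (‖y - H x‖ + ‖G(y) - x‖) dπ(x,y). -/

import Mathlib

open MeasureTheory

/-! Each half of the functional is bounded by the cost separately: `φ x - φ (G y) ≤ ‖G y - x‖`
and `ψ y - ψ (H x) ≤ ‖y - H x‖` pointwise since `φ, ψ` are 1-Lipschitz, and integrating such a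
bound `f x + g y ≤ c (x, y)` against a coupling gives `∫ f dμ + ∫ g dν ≤ ∫ c dπ`. -/

theorem integral_add_integral_le_of_coupling {X Y : Type*} [MeasurableSpace X] [MeasurableSpace Y]
    {π : Measure (X × Y)} {μ : Measure X} {ν : Measure Y}
    (hπ1 : π.map Prod.fst = μ) (hπ2 : π.map Prod.snd = ν)
    {f : X → ℝ} {g : Y → ℝ} {c : X × Y → ℝ}
    (hf : Integrable f μ) (hg : Integrable g ν) (hc : Integrable c π)
    (hle : ∀ x y, f x + g y ≤ c (x, y)) :
    ∫ x, f x ∂μ + ∫ y, g y ∂ν ≤ ∫ p, c p ∂π := by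
  subst hπ1 hπ2
  have hf' : Integrable (fun p => f p.1) π := hf.comp_aemeasurable measurable_fst.aemeasurable
  have hg' : Integrable (fun p => g p.2) π := hg.comp_aemeasurable measurable_snd.aemeasurable
  rw [integral_map measurable_fst.aemeasurable hf.1, integral_map measurable_snd.aemeasurable hg.1,
    ← integral_add hf' hg']
  exact integral_mono (hf'.add hg') hc fun p => hle p.1 p.2

theorem LipschitzWith.sub_le_norm_sub {E : Type*} [SeminormedAddCommGroup E] {f : E → ℝ}
    (hf : LipschitzWith 1 f) (x y : E) : f x - f y ≤ ‖x - y‖ := by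
  simpa [dist_eq_norm] using sub_le_iff_le_add'.2 (hf.le_add_mul x y)

theorem dual_functional_le_transport_cost_general
    {X Y : Type*} [NormedAddCommGroup X] [MeasurableSpace X]
    [NormedAddCommGroup Y] [MeasurableSpace Y]
    (μ : Measure X) (ν : Measure Y)
    (H : X → Y) (G : Y → X)
    (π : Measure (X × Y))
    (hπ1 : π.map Prod.fst = μ) (hπ2 : π.map Prod.snd = ν)
    (φ : X → ℝ) (hφ : LipschitzWith 1 φ)
    (ψ : Y → ℝ) (hψ : LipschitzWith 1 ψ)
    (hφμ : Integrable φ μ) (hφG : Integrable (fun y => φ (G y)) ν)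
    (hψν : Integrable ψ ν) (hψH : Integrable (fun x => ψ (H x)) μ)
    (hc : Integrable (fun p : X × Y => ‖p.2 - H p.1‖ + ‖G p.2 - p.1‖) π) :
    (1 / 2 : ℝ) * (∫ x, φ x ∂μ - ∫ y, φ (G y) ∂ν + ∫ y, ψ y ∂ν - ∫ x, ψ (H x) ∂μ) ≤
      ∫ p, (‖p.2 - H p.1‖ + ‖G p.2 - p.1‖) ∂π := by
  have hφ_bound := integral_add_integral_le_of_coupling hπ1 hπ2 hφμ hφG.neg hc fun x y => by
    have := hφ.sub_le_norm_sub x (G y)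
    have := norm_nonneg (y - H x)
    rw [norm_sub_rev] at *
    simp only [Pi.neg_apply]
    linarith
  have hψ_bound := integral_add_integral_le_of_coupling hπ1 hπ2 hψH.neg hψν hc fun x y => by
    have := hψ.sub_le_norm_sub y (H x)
    have := norm_nonneg (G y - x)
    simp only [Pi.neg_apply]
    linarith
  simp only [Pi.neg_apply, integral_neg] at hφ_bound hψ_bound
  linarith

/-- The averaged dual functional `D(φ,ψ)` is a lower bound for the transport cost
of any coupling `π` of `(μ, ν)`. -/
theorem dual_functional_le_transport_cost
    {X Y : Type*} [NormedAddCommGroup X] [NormedSpace ℝ X] [MeasurableSpace X] [BorelSpace X]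
    [NormedAddCommGroup Y] [NormedSpace ℝ Y] [MeasurableSpace Y] [BorelSpace Y]
    (μ : Measure X) (ν : Measure Y) [IsProbabilityMeasure μ] [IsProbabilityMeasure ν]
    (H : X → Y) (G : Y → X) (hH : Measurable H) (hG : Measurable G)
    (π : Measure (X × Y))
    (hπ1 : π.map Prod.fst = μ) (hπ2 : π.map Prod.snd = ν)
    (φ : X → ℝ) (hφ : LipschitzWith 1 φ)
    (ψ : Y → ℝ) (hψ : LipschitzWith 1 ψ)
    (hφμ : Integrable φ μ) (hφG : Integrable (fun y => φ (G y)) ν)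
    (hψν : Integrable ψ ν) (hψH : Integrable (fun x => ψ (H x)) μ)
    (hc : Integrable (fun p : X × Y => ‖p.2 - H p.1‖ + ‖G p.2 - p.1‖) π) :
    (1 / 2 : ℝ) * (∫ x, φ x ∂μ - ∫ y, φ (G y) ∂ν + ∫ y, ψ y ∂ν - ∫ x, ψ (H x) ∂μ) ≤
      ∫ p, (‖p.2 - H p.1‖ + ‖G p.2 - p.1‖) ∂π :=
  dual_functional_le_transport_cost_general μ ν H G π hπ1 hπ2 φ hφ ψ hψ hφμ hφG hψν hψH hc
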